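/- arXiv:2304.14980 — 2 statements merged into one kernel-verified Lean document; each statement's English description precedes it below -/
import Mathlib

section
/- Let s ∈ [1/2, 3/4], let ε be a real number, and set q = 3/2 − s + ε. Let x be a non-dirty candidate with respect to threshold s in an election with n ≥ 3 candidates, and suppose n ≤ (√((1−s)(7−9s)) + 4 − 5s)/(3 − 4s) and ε > (s−1)/(n−1). Then for every candidate y ≠ x: if x ≥_q y then x is ranked before y in every Kemeny ranking of the election, and if y ≥_q x then y is ranked before x in every Kemeny ranking of the election. -/
/-!
Suppose a Kemeny ranking `π` puts `y` before `x` although `x ≥_q y`. Moving a candidate `u` to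
just behind a later candidate `w` cannot decrease the Kemeny distance, so `u` beats the block of
candidates from `u` to `w` in at least half of all pairwise comparisons. Together with the
triangle inequality for vote counts this bounds the support of `w` over `u` by
`(3/2 - s - (1 - s)/(k + 1)) |V|`, provided `w` is ranked before each of the `k` candidates strictly
between them in at most `(1 - s) |V|` votes. Apply this with `w = x` and `u` the last candidate
from `y` up to `x` that is `y` itself or is `s`-beaten by `x`; since `x` is non-dirty, every
candidate strictly between `u` and `x` `s`-beats `x`. If `u = y` the bound contradicts
`x ≥_q y` by the choice of `ε`; otherwise it contradicts `x ≥_s u`, because then `k ≤ n - 3`.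
The second claim follows by reversing all rankings.
-/

open Finset

/-- A ranking (strict total order) of the finite candidate set `C`, encoded as a
bijection with `Fin (Fintype.card C)`; position `0` is the top of the ranking. -/
abbrev Ranking (C : Type*) [Fintype C] := C ≃ Fin (Fintype.card C)

section Defs

variable {C : Type*} [Fintype C] [DecidableEq C]

/-- `x` is ranked (strictly) before `y` in the ranking `π`. -/
def Before (π : Ranking C) (x y : C) : Prop := π x < π y

instance (π : Ranking C) (x y : C) : Decidable (Before π x y) :=
  inferInstanceAs (Decidable (π x < π y))

instance : DecidableEq (Ranking C) := fun a b =>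
  decidable_of_iff (∀ i, a i = b i) Equiv.ext_iff.symm

/-- The top-ranked element of `S ⊆ C` according to `π` (`⊤` if `S = ∅`). -/
def topS (π : Ranking C) (S : Finset C) : WithTop C :=
  (S.image π).min.map (fun i => π.symm i)

/-- The `k`-wise Kendall-tau distance between two rankings: the number of subsets
`S ⊆ C` with `|S| ≤ k` on whose top element the two rankings disagree (subsets of
size at most one never contribute). -/
def kDist (k : ℕ) (π σ : Ranking C) : ℕ :=
  ((Finset.univ : Finset C).powerset.filter
    (fun S => S.card ≤ k ∧ topS π S ≠ topS σ S)).card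

/-- The `k`-wise Kendall-tau distance from a ranking to a voting profile. -/
def kDistV (k : ℕ) (π : Ranking C) (V : Multiset (Ranking C)) : ℕ :=
  (V.map (fun σ => kDist k π σ)).sum

/-- `π` is a `k`-wise median (for `k = 2`: a Kemeny ranking) of the profile `V`. -/
def IsKMedian (k : ℕ) (V : Multiset (Ranking C)) (π : Ranking C) : Prop :=
  ∀ σ : Ranking C, kDistV k π V ≤ kDistV k σ V

/-- The number of votes of `V` in which `x` is ranked before `y`. -/
def votesBefore (V : Multiset (Ranking C)) (x y : C) : ℕ :=
  Multiset.card (V.filter (fun v => Before v x y))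

/-- `x ≥ₛ y` : `x` is ranked before `y` in at least `s·|V|` of the votes. -/
def AtLeastRatio (V : Multiset (Ranking C)) (s : ℝ) (x y : C) : Prop :=
  s * (Multiset.card V : ℝ) ≤ (votesBefore V x y : ℝ)

/-- `x >ₛ y` : `x` is ranked before `y` in more than `s·|V|` of the votes. -/
def MoreThanRatio (V : Multiset (Ranking C)) (s : ℝ) (x y : C) : Prop :=
  s * (Multiset.card V : ℝ) < (votesBefore V x y : ℝ)

noncomputable instance (V : Multiset (Ranking C)) (s : ℝ) (x y : C) :
    Decidable (AtLeastRatio V s x y) :=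
  inferInstanceAs (Decidable (s * (Multiset.card V : ℝ) ≤ (votesBefore V x y : ℝ)))

/-- `x` is a non-dirty candidate w.r.t. threshold `s`. -/
def NonDirty (V : Multiset (Ranking C)) (s : ℝ) (x : C) : Prop :=
  ∀ y : C, y ≠ x → AtLeastRatio V s x y ∨ AtLeastRatio V s y x

/-- `x` is ranked first (is the winner) in the ranking `π`. -/
def RankedFirst (π : Ranking C) (x : C) : Prop :=
  ∀ y : C, y ≠ x → Before π x y

instance (π : Ranking C) (x : C) : Decidable (RankedFirst π x) :=
  inferInstanceAs (Decidable (∀ y : C, y ≠ x → Before π x y))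

end Defs

section Rankings

variable {C : Type*} [Fintype C]

theorem Before.ne {π : Ranking C} {a b : C} (h : Before π a b) : a ≠ b := by
  rintro rfl
  exact lt_irrefl _ h

theorem Before.asymm {π : Ranking C} {a b : C} (h : Before π a b) : ¬ Before π b a :=
  lt_asymm h

theorem before_or_before (π : Ranking C) {a b : C} (h : a ≠ b) :
    Before π a b ∨ Before π b a :=
  lt_or_gt_of_ne (π.injective.ne h)

theorem exists_ranking_before_iff {α : Type*} [LinearOrder α] (key : C → α)
    (hkey : Function.Injective key) :
    ∃ σ : Ranking C, ∀ a b, Before σ a b ↔ key a < key b := by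
  have hcard : #(univ.image key) = Fintype.card C := by
    rw [card_image_of_injective _ hkey, card_univ]
  let e := (univ.image key).orderIsoOfFin hcard
  let g : C → Fin (Fintype.card C) :=
    fun c => e.symm ⟨key c, mem_image_of_mem key (mem_univ c)⟩
  have hg : Function.Injective g := fun a b hab =>
    hkey (by simpa using congrArg Subtype.val (e.symm.injective hab))
  have hgbij : Function.Bijective g :=
    (Fintype.bijective_iff_injective_and_card g).mpr ⟨hg, by simp⟩
  exact ⟨Equiv.ofBijective g hgbij, fun a b => e.symm.lt_iff_lt⟩

def Ranking.reverse (π : Ranking C) : Ranking C := π.trans Fin.revPerm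

theorem before_reverse {π : Ranking C} {a b : C} : Before π.reverse a b ↔ Before π b a := by
  simp [Ranking.reverse, Before]

theorem Ranking.reverse_reverse (π : Ranking C) : π.reverse.reverse = π :=
  Equiv.ext fun c => by simp [Ranking.reverse]

def between (π : Ranking C) (a b : C) : Finset C :=
  univ.filter fun z => Before π a z ∧ Before π z b

theorem card_between (π : Ranking C) (a b : C) : #(between π a b) = π b - π a - 1 := by
  rw [← Fin.card_Ioo]
  exact card_equiv π fun z => (mem_filter_univ _).trans mem_Ioo.symm

theorem card_between_add_le {π : Ranking C} {a b : C} (hab : Before π a b) :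
    #(between π a b) + π a + 2 ≤ Fintype.card C := by
  have := (π b).isLt
  have : (π a : ℕ) < π b := hab
  rw [card_between]
  omega

theorem exists_last_before {π : Ranking C} {P : C → Prop} {x y : C}
    (hy : P y) (hyx : Before π y x) :
    ∃ u, P u ∧ π y ≤ π u ∧ Before π u x ∧ ∀ z ∈ between π u x, ¬ P z := by
  classical
  obtain ⟨u, hu, hmax⟩ :=
    exists_max_image (univ.filter fun z => P z ∧ π y ≤ π z ∧ Before π z x) π
      ⟨y, by simp [hy, hyx]⟩
  simp only [mem_filter, mem_univ, true_and] at hu hmax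
  refine ⟨u, hu.1, hu.2.1, hu.2.2, fun z hz hPz => ?_⟩
  simp only [between, mem_filter, mem_univ, true_and] at hz
  exact absurd hz.1 (not_lt.mpr (hmax z ⟨hPz, hu.2.1.trans hz.1.le, hz.2⟩))

theorem votesBefore_eq_sum (V : Multiset (Ranking C)) (a b : C) :
    votesBefore V a b = (V.map fun σ => if Before σ a b then 1 else 0).sum := by
  induction V using Multiset.induction_on with
  | empty => simp [votesBefore]
  | cons σ V ih =>
    rw [Multiset.map_cons, Multiset.sum_cons, ← ih]
    by_cases h : Before σ a b <;> simp [votesBefore, h, add_comm]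

theorem votesBefore_add_votesBefore (V : Multiset (Ranking C)) {a b : C} (h : a ≠ b) :
    votesBefore V a b + votesBefore V b a = Multiset.card V := by
  conv_rhs => rw [← Multiset.filter_add_not (fun σ => Before σ a b) V]
  rw [votesBefore, votesBefore, Multiset.card_add]
  congr 2
  exact Multiset.filter_congr fun σ _ => ⟨Before.asymm, (before_or_before σ h).resolve_left⟩

theorem votesBefore_le_add (V : Multiset (Ranking C)) (a b c : C) :
    votesBefore V a c ≤ votesBefore V a b + votesBefore V b c := by
  simp only [votesBefore_eq_sum, ← Multiset.sum_map_add]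
  refine Multiset.sum_map_le_sum_map _ _ fun σ _ => ?_
  by_cases hab : Before σ a b
  · split_ifs <;> simp
  · by_cases hac : Before σ a c
    · have hbc : Before σ b c := lt_of_le_of_lt (not_lt.mp hab) hac
      simp [hac, hab, hbc]
    · simp [hac]

theorem votesBefore_le_of_atLeastRatio {V : Multiset (Ranking C)} {s : ℝ} {x z : C}
    (hzx : z ≠ x) (h : AtLeastRatio V s z x) :
    (votesBefore V x z : ℝ) ≤ (1 - s) * Multiset.card V := by
  have hsum : (votesBefore V x z : ℝ) + votesBefore V z x = Multiset.card V := by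
    exact_mod_cast votesBefore_add_votesBefore V hzx.symm
  unfold AtLeastRatio at h
  linarith

theorem votesBefore_map_reverse (V : Multiset (Ranking C)) (a b : C) :
    votesBefore (V.map Ranking.reverse) a b = votesBefore V b a := by
  simp [votesBefore, Multiset.filter_map, before_reverse]

theorem atLeastRatio_map_reverse {V : Multiset (Ranking C)} {s : ℝ} {a b : C} :
    AtLeastRatio (V.map Ranking.reverse) s a b ↔ AtLeastRatio V s b a := by
  simp [AtLeastRatio, votesBefore_map_reverse]

theorem NonDirty.exists_last_beaten_before {V : Multiset (Ranking C)} {s : ℝ} {x y : C}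
    (hx : NonDirty V s x) {π : Ranking C} (hyx : Before π y x) :
    ∃ u, (u = y ∨ AtLeastRatio V s x u) ∧ π y ≤ π u ∧ Before π u x ∧
      ∀ z ∈ between π u x, (votesBefore V x z : ℝ) ≤ (1 - s) * Multiset.card V := by
  obtain ⟨u, hPu, hyu, hux, hnot⟩ :=
    exists_last_before (P := fun z => z = y ∨ AtLeastRatio V s x z) (Or.inl rfl) hyx
  refine ⟨u, hPu, hyu, hux, fun z hz => ?_⟩
  have hzx : z ≠ x := (mem_filter.mp hz).2.2.ne
  exact votesBefore_le_of_atLeastRatio hzx ((hx z hzx).resolve_left fun h => hnot z hz (Or.inr h))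

theorem NonDirty.map_reverse {V : Multiset (Ranking C)} {s : ℝ} {x : C}
    (hx : NonDirty V s x) : NonDirty (V.map Ranking.reverse) s x := fun y hy => by
  simpa only [atLeastRatio_map_reverse, or_comm] using hx y hy

def disagreements (π σ : Ranking C) : Finset (C × C) :=
  {p | Before π p.1 p.2 ∧ Before σ p.2 p.1}

theorem mem_disagreements {π σ : Ranking C} {p : C × C} :
    p ∈ disagreements π σ ↔ Before π p.1 p.2 ∧ Before σ p.2 p.1 := by
  simp [disagreements]

theorem topS_eq_of_card_le_one (π σ : Ranking C) {S : Finset C} (h : #S ≤ 1) :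
    topS π S = topS σ S := by
  rcases Nat.le_one_iff_eq_zero_or_eq_one.mp h with h | h
  · simp [card_eq_zero.mp h, topS]
  · obtain ⟨a, rfl⟩ := card_eq_one.mp h
    simp [topS]

end Rankings

theorem lt_three_quarters_and_mul_lt {n s : ℝ} (hn0 : 0 < n) (hs : s ≤ 3 / 4)
    (hn : n ≤ (√((1 - s) * (7 - 9 * s)) + 4 - 5 * s) / (3 - 4 * s)) :
    s < 3 / 4 ∧ n * (3 - 4 * s) < 8 - 10 * s := by
  have hs' : s < 3 / 4 := by
    refine hs.lt_of_ne fun h => ?_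
    subst h
    norm_num at hn
    linarith
  have hsqrt : √((1 - s) * (7 - 9 * s)) < 4 - 5 * s :=
    (Real.sqrt_lt' (by linarith)).mpr (by nlinarith)
  have := (le_div_iff₀ (by linarith : (0 : ℝ) < 3 - 4 * s)).mp hn
  exact ⟨hs', by linarith⟩

section Kemeny

variable {C : Type*} [Fintype C] [DecidableEq C]

theorem topS_pair {π : Ranking C} {a b : C} (h : Before π a b) : topS π {a, b} = a := by
  rw [topS, image_insert, image_singleton, Finset.min, inf_insert, inf_singleton,
    ← WithTop.coe_min, min_eq_left h.le]
  simp

theorem topS_pair_ne_iff {π : Ranking C} {a b : C} (h : Before π a b) (σ : Ranking C) :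
    topS π {a, b} ≠ topS σ {a, b} ↔ Before σ b a := by
  rcases before_or_before σ h.ne with h' | h'
  · simp [topS_pair h, topS_pair h', h'.asymm]
  · rw [topS_pair h, pair_comm, topS_pair h']
    simp [h.ne, h']

theorem kDist_two_eq_card (π σ : Ranking C) :
    kDist 2 π σ = #(disagreements π σ) := by
  symm
  refine card_nbij (fun p => {p.1, p.2}) ?_ ?_ ?_
  · rintro ⟨a, b⟩ hp
    rw [mem_coe, mem_disagreements] at hp
    simp [card_le_two, (topS_pair_ne_iff hp.1 σ).mpr hp.2]
  · rintro ⟨a, b⟩ hab ⟨c, d⟩ hcd h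
    rw [mem_coe, mem_disagreements] at hab hcd
    simp only at h
    have hac : a = c := by simpa [topS_pair hab.1, topS_pair hcd.1] using congrArg (topS π) h
    subst hac
    have hb : b ∈ ({a, d} : Finset C) := h ▸ by simp
    simp only [mem_insert, mem_singleton] at hb
    rcases hb with rfl | rfl
    · exact absurd hab.1 (lt_irrefl _)
    · rfl
  · intro S hS
    simp only [coe_filter, mem_powerset, Set.mem_ofPred_eq, subset_univ, true_and] at hS
    obtain ⟨hcard, hne⟩ := hS
    have h2 : #S = 2 := by
      by_contra h
      exact hne (topS_eq_of_card_le_one π σ (by omega))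
    obtain ⟨a, b, hab, rfl⟩ := card_eq_two.mp h2
    rcases before_or_before π hab with h | h
    · exact ⟨(a, b), mem_disagreements.mpr ⟨h, (topS_pair_ne_iff h σ).mp hne⟩, rfl⟩
    · rw [pair_comm] at hne
      exact ⟨(b, a), mem_disagreements.mpr ⟨h, (topS_pair_ne_iff h σ).mp hne⟩,
        pair_comm b a⟩

theorem kDistV_two_eq_sum (π : Ranking C) (V : Multiset (Ranking C)) :
    kDistV 2 π V = ∑ p : C × C, if Before π p.1 p.2 then votesBefore V p.2 p.1 else 0 := by
  simp only [kDistV, kDist_two_eq_card, disagreements, card_filter, votesBefore_eq_sum, ite_and,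
    Multiset.sum_map_sum]
  refine sum_congr rfl fun p _ => ?_
  split_ifs <;> simp

theorem exists_ranking_moved_after {π : Ranking C} {u w : C} (huw : Before π u w) :
    ∃ σ : Ranking C, disagreements π σ = {u} ×ˢ insert w (between π u w) := by
  -- `σ` moves `u` to just behind `w`; doubling the positions of `π` leaves room for it.
  let key : C → ℕ := fun c => if c = u then 2 * π w + 1 else 2 * π c
  have hkey : Function.Injective key := by
    intro a b h
    by_cases ha : a = u <;> by_cases hb : b = u <;> simp only [key, ha, hb, if_true, if_false] at h
    · rw [ha, hb]
    · omega
    · omega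
    · exact π.injective (Fin.ext (by omega))
  obtain ⟨σ, hσ⟩ := exists_ranking_before_iff key hkey
  refine ⟨σ, ext fun ⟨a, b⟩ => ?_⟩
  have hπ : ∀ c d : C, Before π c d ↔ (π c : ℕ) < π d := fun _ _ => Fin.lt_def
  have hπ' : ∀ c d : C, π c = π d ↔ c = d := fun _ _ => π.injective.eq_iff
  simp only [disagreements, between, mem_filter, mem_product, mem_singleton, mem_insert, mem_univ,
    true_and, hσ, key, hπ, ← hπ', Fin.ext_iff]
  have huw' := (hπ u w).mp huw
  split_ifs <;> omega

theorem kDistV_two_reverse_map_reverse (π : Ranking C) (V : Multiset (Ranking C)) :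
    kDistV 2 π.reverse (V.map Ranking.reverse) = kDistV 2 π V := by
  rw [kDistV_two_eq_sum, kDistV_two_eq_sum]
  exact Fintype.sum_equiv (Equiv.prodComm C C) _ _ fun p =>
    if_congr before_reverse (votesBefore_map_reverse V p.2 p.1) rfl

theorem IsKMedian.reverse {V : Multiset (Ranking C)} {π : Ranking C} (hm : IsKMedian 2 V π) :
    IsKMedian 2 (V.map Ranking.reverse) π.reverse := fun σ => by
  have := hm σ.reverse
  rwa [← kDistV_two_reverse_map_reverse π, ← kDistV_two_reverse_map_reverse σ.reverse,
    Ranking.reverse_reverse] at this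

theorem IsKMedian.sum_le_sum_of_disagree {V : Multiset (Ranking C)} {π : Ranking C}
    (hm : IsKMedian 2 V π) (σ : Ranking C) :
    ∑ p ∈ disagreements π σ, votesBefore V p.2 p.1 ≤
      ∑ p ∈ disagreements π σ, votesBefore V p.1 p.2 := by
  have split : ∀ (τ τ' : Ranking C) (p : C × C) (n : ℕ),
      (if Before τ p.1 p.2 then n else 0) =
        (if Before τ p.1 p.2 ∧ Before τ' p.1 p.2 then n else 0) +
          (if Before τ p.1 p.2 ∧ Before τ' p.2 p.1 then n else 0) := by
    intro τ τ' p n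
    by_cases h : Before τ p.1 p.2
    · rcases before_or_before τ' h.ne with h' | h' <;> simp [h, h', h'.asymm]
    · simp [h]
  have agree :
      ∑ p : C × C,
        (if Before σ p.1 p.2 ∧ Before π p.1 p.2 then votesBefore V p.2 p.1 else 0) =
        ∑ p : C × C,
          (if Before π p.1 p.2 ∧ Before σ p.1 p.2 then votesBefore V p.2 p.1 else 0) := by
    simp only [and_comm]
  have swap :
      ∑ p : C × C,
        (if Before σ p.1 p.2 ∧ Before π p.2 p.1 then votesBefore V p.2 p.1 else 0) =
        ∑ p : C × C,
          (if Before π p.1 p.2 ∧ Before σ p.2 p.1 then votesBefore V p.1 p.2 else 0) :=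
    Fintype.sum_equiv (Equiv.prodComm C C) _ _ fun _ => if_congr and_comm rfl rfl
  have h := hm σ
  simp only [kDistV_two_eq_sum, split π σ, split σ π, sum_add_distrib, agree, swap] at h
  simp only [disagreements, sum_filter]
  omega

theorem IsKMedian.card_mul_le_two_mul_sum {V : Multiset (Ranking C)} {π : Ranking C}
    (hm : IsKMedian 2 V π) {u w : C} (huw : Before π u w) :
    #(insert w (between π u w)) * Multiset.card V ≤
      2 * ∑ z ∈ insert w (between π u w), votesBefore V u z := by
  obtain ⟨σ, hσ⟩ := exists_ranking_moved_after huw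
  have flip := hm.sum_le_sum_of_disagree σ
  simp only [hσ, sum_product, sum_singleton] at flip
  set T := insert w (between π u w)
  have pair : ∑ z ∈ T, (votesBefore V u z + votesBefore V z u) = #T * Multiset.card V := by
    refine sum_const_nat fun z hz => votesBefore_add_votesBefore V ?_
    rcases mem_insert.mp hz with rfl | hz
    · exact huw.ne
    · exact (mem_filter.mp hz).2.1.ne
  rw [sum_add_distrib] at pair
  omega

theorem IsKMedian.votesBefore_le {V : Multiset (Ranking C)} {π : Ranking C}
    (hm : IsKMedian 2 V π) {u w : C} (huw : Before π u w) {s : ℝ}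
    (hlow : ∀ z ∈ between π u w, (votesBefore V w z : ℝ) ≤ (1 - s) * Multiset.card V) :
    (votesBefore V w u : ℝ) ≤
      (3 / 2 - s - (1 - s) / (#(between π u w) + 1)) * Multiset.card V := by
  set S := between π u w
  suffices 2 * (#S + 1) * (votesBefore V w u : ℝ) ≤ ((3 - 2 * s) * #S + 1) * Multiset.card V by
    have e : (3 / 2 - s - (1 - s) / (#S + 1)) * Multiset.card V =
        ((3 - 2 * s) * #S + 1) * Multiset.card V / (2 * (#S + 1)) := by
      field_simp
      ring
    rw [e, le_div_iff₀ (by positivity)]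
    linarith
  have hwS : w ∉ S := fun h => lt_irrefl _ (mem_filter.mp h).2.2
  have half := hm.card_mul_le_two_mul_sum huw
  rw [card_insert_of_notMem hwS, sum_insert hwS] at half
  have half' : ((#S : ℝ) + 1) * Multiset.card V ≤
      2 * (votesBefore V u w + ∑ z ∈ S, (votesBefore V u z : ℝ)) := by
    exact_mod_cast half
  have tri : ∑ z ∈ S, (votesBefore V u z : ℝ) ≤
      #S * (votesBefore V u w + (1 - s) * Multiset.card V) := by
    rw [← nsmul_eq_mul, ← sum_const]
    refine sum_le_sum fun z hz => ?_
    have htri : (votesBefore V u z : ℝ) ≤ votesBefore V u w + votesBefore V w z := by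
      exact_mod_cast votesBefore_le_add V u w z
    linarith [hlow z hz]
  have hsum : (votesBefore V u w : ℝ) + votesBefore V w u = Multiset.card V := by
    exact_mod_cast votesBefore_add_votesBefore V huw.ne
  nlinarith

theorem before_of_atLeastRatio {V : Multiset (Ranking C)} (hV : V ≠ 0) {s ε : ℝ}
    (hs : s ≤ 3 / 4)
    (hn : (Fintype.card C : ℝ) ≤ (√((1 - s) * (7 - 9 * s)) + 4 - 5 * s) / (3 - 4 * s))
    (hε : (s - 1) / ((Fintype.card C : ℝ) - 1) < ε)
    {x y : C} (hx : NonDirty V s x) (hy : y ≠ x) (hq : AtLeastRatio V (3 / 2 - s + ε) x y)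
    {π : Ranking C} (hm : IsKMedian 2 V π) : Before π x y := by
  by_contra hxy
  have hyx : Before π y x := (before_or_before π hy).resolve_right hxy
  obtain ⟨hs', hcrit⟩ := lt_three_quarters_and_mul_lt
    (by exact_mod_cast Fintype.card_pos_iff.mpr ⟨x⟩) hs hn
  obtain ⟨u, hPu, hyu, hux, hlow⟩ := hx.exists_last_beaten_before hyx
  have key := hm.votesBefore_le hux hlow
  have hM : (0 : ℝ) < Multiset.card V := by exact_mod_cast Multiset.card_pos.mpr hV
  have hKR : (#(between π u x) : ℝ) + (π u : ℕ) + 2 ≤ Fintype.card C := by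
    exact_mod_cast card_between_add_le hux
  set K : ℝ := (#(between π u x) : ℝ)
  have hK0 : 0 ≤ K := Nat.cast_nonneg _
  have hu0 : (0 : ℝ) ≤ (π u : ℕ) := Nat.cast_nonneg _
  by_cases huy : u = y
  · subst huy
    have hεK : ε ≤ -((1 - s) / (K + 1)) := by
      have := le_of_mul_le_mul_right (le_trans hq key) hM
      linarith
    have hmono : (1 - s) / (Fintype.card C - 1) ≤ (1 - s) / (K + 1) :=
      div_le_div_of_nonneg_left (by linarith) (by positivity) (by linarith)
    rw [← neg_sub 1 s, neg_div] at hε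
    linarith
  · have hu : (1 : ℝ) ≤ (π u : ℕ) := by
      have : (π y : ℕ) < π u :=
        Fin.lt_def.mp (lt_of_le_of_ne hyu (π.injective.ne (Ne.symm huy)))
      exact_mod_cast (by omega : 1 ≤ (π u : ℕ))
    have hsK : (1 - s) / (K + 1) ≤ 3 / 2 - 2 * s := by
      have := le_of_mul_le_mul_right (le_trans (hPu.resolve_left huy) key) hM
      linarith
    have hmono : (1 - s) / (Fintype.card C - 2) ≤ (1 - s) / (K + 1) :=
      div_le_div_of_nonneg_left (by linarith) (by positivity) (by linarith)
    have := (div_le_iff₀ (by linarith)).mp (hmono.trans hsK)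
    linarith

end Kemeny

theorem stmt2_general {C : Type*} [Fintype C] [DecidableEq C]
    (V : Multiset (Ranking C)) (hV : V ≠ 0)
    (s ε : ℝ) (hs2 : s ≤ 3 / 4)
    (hn : (Fintype.card C : ℝ) ≤
      (Real.sqrt ((1 - s) * (7 - 9 * s)) + 4 - 5 * s) / (3 - 4 * s))
    (hε : (s - 1) / ((Fintype.card C : ℝ) - 1) < ε)
    (x : C) (hx : NonDirty V s x) :
    ∀ y : C, y ≠ x →
      (AtLeastRatio V (3 / 2 - s + ε) x y →
        ∀ π : Ranking C, IsKMedian 2 V π → Before π x y) ∧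
      (AtLeastRatio V (3 / 2 - s + ε) y x →
        ∀ π : Ranking C, IsKMedian 2 V π → Before π y x) := by
  intro y hy
  refine ⟨fun hq π hm => before_of_atLeastRatio hV hs2 hn hε hx hy hq hm, fun hq π hm => ?_⟩
  rw [← before_reverse]
  exact before_of_atLeastRatio (by simpa using hV) hs2 hn hε hx.map_reverse hy
    (atLeastRatio_map_reverse.mpr hq) hm.reverse

/-- the extended `s`-majority rule for the Kemeny (2-wise) scheme. -/
theorem stmt2 {C : Type*} [Fintype C] [DecidableEq C]
    (V : Multiset (Ranking C)) (hV : V ≠ 0)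
    (s ε : ℝ) (hs1 : 1 / 2 ≤ s) (hs2 : s ≤ 3 / 4)
    (hn3 : 3 ≤ Fintype.card C)
    (hn : (Fintype.card C : ℝ) ≤
      (Real.sqrt ((1 - s) * (7 - 9 * s)) + 4 - 5 * s) / (3 - 4 * s))
    (hε : (s - 1) / ((Fintype.card C : ℝ) - 1) < ε)
    (x : C) (hx : NonDirty V s x) :
    ∀ y : C, y ≠ x →
      (AtLeastRatio V (3 / 2 - s + ε) x y →
        ∀ π : Ranking C, IsKMedian 2 V π → Before π x y) ∧
      (AtLeastRatio V (3 / 2 - s + ε) y x →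
        ∀ π : Ranking C, IsKMedian 2 V π → Before π y x) :=
  stmt2_general V hV s ε hs2 hn hε x hx
end

section
/- Let C be the set of candidates in an election and suppose C = I ∪ J is a partition of C such that (i) x ≥_{3/4} y for all x ∈ I and y ∈ J, and (ii) 0 < |I| ≤ (|J| + 4)/2. Then the candidate ranked first in every 3-wise median of the election belongs to I. -/
open Finset

/-!
Let `b` be the highest candidate of `I` in a median `π` whose winner lies in `J`, so the
nonempty set `B` of candidates above `b` lies in `J`. Moving `b` to the front only changes the
top of the sets `S ∋ b` meeting `B`. On such a set every vote putting `b` before the old top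
disagrees with `π`, which gives at least `3|V|/4` disagreements; the new ranking disagrees only
with votes in which another member of `S` beats `b`, at most `(|S| - 1)|V|/4` of them when
`S ⊆ {b} ∪ J`. So the `m = |B|` pairs `{b, c}` gain `|V|/2` each, the at least
`C(|J|, 2) - C(|J| - m, 2)` triples inside `{b} ∪ J` gain `|V|/4` each, and the at most
`m (|I| - 1)` remaining triples lose at most `|V|/4` each. Since `2|I| ≤ |J| + 4`, the total
gain is positive, contradicting minimality of `π`.
-/

theorem Fin.cycleRange_self_le {n : ℕ} (i j : Fin n) : i.cycleRange i ≤ i.cycleRange j := by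
  cases n with
  | zero => exact i.elim0
  | succ n => simp

theorem Fin.cycleRange_lt_cycleRange_iff {n : ℕ} {i j k : Fin n} (hj : j ≠ i) (hk : k ≠ i) :
    i.cycleRange j < i.cycleRange k ↔ j < k := by
  cases n with
  | zero => exact i.elim0
  | succ n =>
    obtain ⟨j, rfl⟩ := Fin.exists_succAbove_eq hj
    obtain ⟨k, rfl⟩ := Fin.exists_succAbove_eq hk
    rw [Fin.cycleRange_succAbove, Fin.cycleRange_succAbove, Fin.succ_lt_succ_iff,
      Fin.succAbove_lt_succAbove_iff]

theorem Finset.min_eq_coe_iff {α : Type*} [LinearOrder α] {s : Finset α} {a : α} :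
    s.min = a ↔ a ∈ s ∧ ∀ b ∈ s, a ≤ b :=
  ⟨fun h => ⟨mem_of_min h, fun _ hb => WithTop.coe_le_coe.mp (h ▸ min_le hb)⟩,
    fun ⟨ha, hle⟩ =>
      le_antisymm (min_le ha) (Finset.le_min fun b hb => WithTop.coe_le_coe.mpr (hle b hb))⟩

namespace Multiset

variable {α ι : Type*}

theorem card_filter_eq_sum_map_ite (s : Multiset α) (p : α → Prop) [DecidablePred p] :
    card (s.filter p) = (s.map fun a => if p a then 1 else 0).sum := by
  induction s using Multiset.induction_on with
  | empty => simp
  | cons a s ih => by_cases h : p a <;> simp [h, ih, add_comm]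

theorem card_filter_exists_le_sum (s : Multiset α) (t : Finset ι) (p : ι → α → Prop)
    [∀ i, DecidablePred (p i)] :
    card (s.filter fun a => ∃ i ∈ t, p i a) ≤ ∑ i ∈ t, card (s.filter (p i)) := by
  simp only [card_filter_eq_sum_map_ite, Finset.sum_eq_multiset_sum]
  rw [sum_map_sum_map]
  refine sum_map_le_sum_map _ _ fun a _ => ?_
  split_ifs with h
  · obtain ⟨i, hi, hpi⟩ := h
    calc 1 = if p i a then 1 else 0 := (if_pos hpi).symm
      _ ≤ _ := Finset.single_le_sum (f := fun i => if p i a then 1 else 0)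
          (fun _ _ => Nat.zero_le _) hi
  · exact Nat.zero_le _

end Multiset

section Rankings

variable {C : Type*} [Fintype C]

theorem topS_eq_coe_iff {π : Ranking C} {S : Finset C} {t : C} :
    topS π S = t ↔ t ∈ S ∧ ∀ y ∈ S, π t ≤ π y := by
  have h : (t : WithTop C) = WithTop.map π.symm ((π t : Fin _) : WithTop _) := by simp
  rw [topS, h, (WithTop.map_injective π.symm.injective).eq_iff, Finset.min_eq_coe_iff]
  simp

-- `Fin.cycleRange i` sends `i` to `0` and shifts `0, …, i - 1` up by one.
def moveToFront (π : Ranking C) (b : C) : Ranking C :=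
  π.trans (Fin.cycleRange (π b))

theorem moveToFront_lt_moveToFront_iff {π : Ranking C} {b c d : C} (hc : c ≠ b) (hd : d ≠ b) :
    moveToFront π b c < moveToFront π b d ↔ π c < π d :=
  Fin.cycleRange_lt_cycleRange_iff (π.injective.ne hc) (π.injective.ne hd)

theorem topS_moveToFront_of_mem {π : Ranking C} {b : C} {S : Finset C} (hb : b ∈ S) :
    topS (moveToFront π b) S = b :=
  topS_eq_coe_iff.mpr ⟨hb, fun y _ => Fin.cycleRange_self_le (π b) (π y)⟩

theorem topS_moveToFront_of_notMem {π : Ranking C} {b : C} {S : Finset C} (hb : b ∉ S) :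
    topS (moveToFront π b) S = topS π S := by
  have hle : ∀ c ∈ S, ∀ d ∈ S, moveToFront π b c ≤ moveToFront π b d ↔ π c ≤ π d := by
    intro c hc d hd
    rw [← not_lt, ← not_lt, moveToFront_lt_moveToFront_iff (ne_of_mem_of_not_mem hd hb)
      (ne_of_mem_of_not_mem hc hb)]
  refine Option.ext fun t => ?_
  change topS _ S = t ↔ topS π S = t
  simp only [topS_eq_coe_iff]
  exact and_congr_right fun ht => forall₂_congr fun y hy => hle t ht y hy

theorem topS_moveToFront_of_forall_le {π : Ranking C} {b : C} {S : Finset C}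
    (h : b ∈ S → ∀ c ∈ S, π b ≤ π c) : topS (moveToFront π b) S = topS π S := by
  by_cases hb : b ∈ S
  · rw [topS_moveToFront_of_mem hb, eq_comm, topS_eq_coe_iff]
    exact ⟨hb, h hb⟩
  · exact topS_moveToFront_of_notMem hb

def rankedAbove (π : Ranking C) (b : C) : Finset C := {c | π c < π b}

theorem mem_rankedAbove {π : Ranking C} {b c : C} : c ∈ rankedAbove π b ↔ π c < π b := by
  simp [rankedAbove]

end Rankings

section Votes

variable {C : Type*} [Fintype C] [DecidableEq C]

def topDisagreements (V : Multiset (Ranking C)) (ρ : Ranking C) (S : Finset C) : ℕ :=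
  Multiset.card (V.filter fun σ => topS ρ S ≠ topS σ S)

theorem kDistV_eq_sum_topDisagreements (k : ℕ) (π : Ranking C) (V : Multiset (Ranking C)) :
    kDistV k π V = ∑ S ∈ univ.powerset with S.card ≤ k, topDisagreements V π S := by
  simp only [kDistV, kDist, topDisagreements, ← filter_filter, card_filter,
    Multiset.card_filter_eq_sum_map_ite, sum_eq_multiset_sum]
  exact Multiset.sum_map_sum_map _ _

theorem votesBefore_le_topDisagreements {V : Multiset (Ranking C)} {π : Ranking C}
    {S : Finset C} {b t : C} (hb : b ∈ S) (ht : topS π S = t) :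
    votesBefore V b t ≤ topDisagreements V π S :=
  Multiset.card_le_card <| Multiset.monotone_filter_right V fun _ hbt htop =>
    (not_le.mpr hbt) ((topS_eq_coe_iff.mp (ht ▸ htop).symm).2 b hb)

theorem topDisagreements_le_sum_votesBefore {V : Multiset (Ranking C)} {ρ : Ranking C}
    {S : Finset C} {b : C} (hb : b ∈ S) (hρ : topS ρ S = b) :
    topDisagreements V ρ S ≤ ∑ y ∈ S.erase b, votesBefore V y b := by
  refine (Multiset.card_le_card <| Multiset.monotone_filter_right V fun σ hσ => ?_).trans
    (Multiset.card_filter_exists_le_sum V _ _)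
  rw [hρ, ne_comm, Ne, topS_eq_coe_iff] at hσ
  push Not at hσ
  obtain ⟨y, hy, hyb⟩ := hσ hb
  exact ⟨y, mem_erase.mpr ⟨fun h => (h ▸ hyb).false, hy⟩, hyb⟩

theorem topDisagreements_le_card (V : Multiset (Ranking C)) (ρ : Ranking C) (S : Finset C) :
    topDisagreements V ρ S ≤ Multiset.card V :=
  Multiset.card_le_card (Multiset.filter_le _ _)

end Votes

section Majority

variable {C : Type*} [Fintype C] {V : Multiset (Ranking C)} {x y : C}

theorem votesBefore_add_votesBefore_s9 (hxy : x ≠ y) :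
    votesBefore V x y + votesBefore V y x = Multiset.card V := by
  have hrev : ∀ σ : Ranking C, Before σ y x ↔ ¬Before σ x y := fun σ =>
    ⟨fun h h' => lt_asymm h h', fun h => (not_lt.mp h).lt_of_ne (σ.injective.ne hxy.symm)⟩
  rw [votesBefore, votesBefore, Multiset.filter_congr fun σ _ => hrev σ, ← Multiset.card_add,
    Multiset.filter_add_not]

theorem AtLeastRatio.three_mul_card_le (h : AtLeastRatio V (3 / 4) x y) :
    3 * Multiset.card V ≤ 4 * votesBefore V x y := by
  unfold AtLeastRatio at h
  exact_mod_cast (by linarith : (3 : ℝ) * Multiset.card V ≤ 4 * votesBefore V x y)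

theorem AtLeastRatio.four_mul_votesBefore_le (h : AtLeastRatio V (3 / 4) x y) (hxy : x ≠ y) :
    4 * votesBefore V y x ≤ Multiset.card V := by
  have := votesBefore_add_votesBefore_s9 (V := V) hxy
  have := h.three_mul_card_le
  omega

end Majority

section MoveToFront

variable {C : Type*} [Fintype C] [DecidableEq C]

def affectedSets (π : Ranking C) (b : C) : Finset (Finset C) :=
  {S | S.card ≤ 3 ∧ b ∈ S ∧ ∃ c ∈ S, π c < π b}

def gainWeight (b : C) (J S : Finset C) : ℤ :=
  if S ⊆ insert b J then 4 - (S.card : ℤ) else -1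

theorem mem_affectedSets {π : Ranking C} {b : C} {S : Finset C} :
    S ∈ affectedSets π b ↔ S.card ≤ 3 ∧ b ∈ S ∧ ∃ c ∈ S, π c < π b := by
  simp [affectedSets]

variable {V : Multiset (Ranking C)} {π : Ranking C} {b : C} {J : Finset C}

theorem three_mul_card_le_topDisagreements (hB : rankedAbove π b ⊆ J)
    (hmaj : ∀ y ∈ J, AtLeastRatio V (3 / 4) b y) {S : Finset C} (hb : b ∈ S) {c : C}
    (hc : c ∈ S) (hcb : π c < π b) :
    3 * Multiset.card V ≤ 4 * topDisagreements V π S := by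
  obtain ⟨t, htS, htmin⟩ := S.exists_min_image π ⟨b, hb⟩
  have htJ : t ∈ J := hB (mem_rankedAbove.mpr ((htmin c hc).trans_lt hcb))
  calc 3 * Multiset.card V ≤ 4 * votesBefore V b t := (hmaj t htJ).three_mul_card_le
    _ ≤ 4 * topDisagreements V π S := Nat.mul_le_mul_left 4
      (votesBefore_le_topDisagreements hb (topS_eq_coe_iff.mpr ⟨htS, htmin⟩))

theorem four_mul_topDisagreements_moveToFront_le (hmaj : ∀ y ∈ J, AtLeastRatio V (3 / 4) b y)
    {S : Finset C} (hb : b ∈ S) (hS : S ⊆ insert b J) :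
    4 * topDisagreements V (moveToFront π b) S ≤ (S.card - 1) * Multiset.card V := by
  have hmaj' : ∀ y ∈ S.erase b, 4 * votesBefore V y b ≤ Multiset.card V := fun y hy => by
    obtain ⟨hyb, hyS⟩ := mem_erase.mp hy
    exact (hmaj y ((mem_insert.mp (hS hyS)).resolve_left hyb)).four_mul_votesBefore_le hyb.symm
  calc 4 * topDisagreements V (moveToFront π b) S
      ≤ 4 * ∑ y ∈ S.erase b, votesBefore V y b :=
        Nat.mul_le_mul_left 4
          (topDisagreements_le_sum_votesBefore hb (topS_moveToFront_of_mem hb))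
    _ ≤ ∑ _y ∈ S.erase b, Multiset.card V := by rw [mul_sum]; exact sum_le_sum hmaj'
    _ = (S.card - 1) * Multiset.card V := by rw [sum_const, card_erase_of_mem hb, smul_eq_mul]

theorem card_mul_gainWeight_le_topDisagreements_sub (hB : rankedAbove π b ⊆ J)
    (hmaj : ∀ y ∈ J, AtLeastRatio V (3 / 4) b y) {S : Finset C} (hS : S ∈ affectedSets π b) :
    (Multiset.card V : ℤ) * gainWeight b J S ≤
      4 * ((topDisagreements V π S : ℤ) - topDisagreements V (moveToFront π b) S) := by
  obtain ⟨hcard, hb, c, hc, hcb⟩ := mem_affectedSets.mp hS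
  have hπ := three_mul_card_le_topDisagreements hB hmaj hb hc hcb
  unfold gainWeight
  split_ifs with hSJ
  · have hπ' := four_mul_topDisagreements_moveToFront_le (π := π) hmaj hb hSJ
    have h1 : 1 ≤ S.card := card_pos.mpr ⟨b, hb⟩
    zify [h1] at hπ hπ'
    nlinarith
  · have hπ' := topDisagreements_le_card V (moveToFront π b) S
    zify at hπ hπ'
    linarith

end MoveToFront

section Counting

variable {C : Type*} [Fintype C] [DecidableEq C] {π : Ranking C} {b : C} {J : Finset C}

theorem card_rankedAbove_le_card_affectedSets_card_two (hB : rankedAbove π b ⊆ J) :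
    #(rankedAbove π b) ≤ #{S ∈ affectedSets π b | S ⊆ insert b J ∧ S.card = 2} := by
  have hne : ∀ {c}, c ∈ rankedAbove π b → c ≠ b :=
    fun hc h => (h ▸ mem_rankedAbove.mp hc).false
  refine card_le_card_of_injOn (fun c => {b, c}) (fun c hc => ?_) (fun c hc c' hc' h => ?_)
  · have hcard : ({b, c} : Finset C).card = 2 := card_pair (hne hc).symm
    refine mem_filter.mpr ⟨mem_affectedSets.mpr ⟨hcard.trans_le (by norm_num),
      mem_insert_self b _, c, by simp, mem_rankedAbove.mp hc⟩,
      insert_subset_insert b (singleton_subset_iff.mpr (hB hc)), hcard⟩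
  · have : c' ∈ ({b, c'} : Finset C) := by simp
    rw [← show ({b, c} : Finset C) = {b, c'} from h] at this
    exact (by simpa [hne hc'] using this : c' = c).symm

theorem card_sdiff_le_card_affectedSets_card_ne_two (hbJ : b ∉ J) :
    #(J.powersetCard 2 \ (J \ rankedAbove π b).powersetCard 2) ≤
      #{S ∈ affectedSets π b | S ⊆ insert b J ∧ S.card ≠ 2} := by
  have hbT : ∀ {T}, T ∈ J.powersetCard 2 \ (J \ rankedAbove π b).powersetCard 2 → b ∉ T :=
    fun hT hb => hbJ ((mem_powersetCard.mp (mem_sdiff.mp hT).1).1 hb)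
  refine card_le_card_of_injOn (insert b) (fun T hT => ?_) (fun T hT T' hT' h => ?_)
  · obtain ⟨hTJ, hTcard⟩ := mem_powersetCard.mp (mem_sdiff.mp hT).1
    have hTB : ¬T ⊆ J \ rankedAbove π b := fun h =>
      (mem_sdiff.mp hT).2 (mem_powersetCard.mpr ⟨h, hTcard⟩)
    obtain ⟨c, hcT, hcB⟩ : ∃ c ∈ T, c ∈ rankedAbove π b := by
      by_contra! h
      exact hTB fun c hc => mem_sdiff.mpr ⟨hTJ hc, h c hc⟩
    have hcard : (insert b T).card = 3 := by rw [card_insert_of_notMem (hbT hT), hTcard]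
    exact mem_filter.mpr ⟨mem_affectedSets.mpr ⟨hcard.le, mem_insert_self b T, c,
      mem_insert_of_mem hcT, mem_rankedAbove.mp hcB⟩, insert_subset_insert b hTJ, by omega⟩
  · simpa [erase_insert (hbT hT), erase_insert (hbT hT')] using congrArg (·.erase b) h

theorem card_affectedSets_not_subset_le (hB : rankedAbove π b ⊆ J) :
    #{S ∈ affectedSets π b | ¬S ⊆ insert b J} ≤ #(rankedAbove π b) * #(insert b J)ᶜ := by
  calc _ ≤ #((rankedAbove π b ×ˢ (insert b J)ᶜ).image fun p => ({b, p.1, p.2} : Finset C)) :=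
        card_le_card fun S hS => ?_
    _ ≤ _ := card_image_le.trans (card_product _ _).le
  obtain ⟨hS, hSJ⟩ := mem_filter.mp hS
  obtain ⟨hcard, hb, c, hc, hcb⟩ := mem_affectedSets.mp hS
  obtain ⟨d, hdS, hd⟩ := not_subset.mp hSJ
  refine mem_image.mpr
    ⟨(c, d), mem_product.mpr ⟨mem_rankedAbove.mpr hcb, mem_compl.mpr hd⟩, ?_⟩
  have hbc : b ≠ c := fun h => (h ▸ hcb).false
  have hbd : b ≠ d := fun h => hd (h ▸ mem_insert_self b J)
  have hcd : c ≠ d := fun h => hd (mem_insert_of_mem (h ▸ hB (mem_rankedAbove.mpr hcb)))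
  have hsub : ({b, c, d} : Finset C) ⊆ S := by simp [insert_subset_iff, hb, hc, hdS]
  refine eq_of_subset_of_card_le hsub (hcard.trans_eq ?_)
  rw [card_insert_of_notMem (by simp [hbc, hbd]), card_pair hcd]

theorem sum_gainWeight_ge :
    2 * (#{S ∈ affectedSets π b | S ⊆ insert b J ∧ S.card = 2} : ℤ)
        + #{S ∈ affectedSets π b | S ⊆ insert b J ∧ S.card ≠ 2}
        - #{S ∈ affectedSets π b | ¬S ⊆ insert b J} ≤
      ∑ S ∈ affectedSets π b, gainWeight b J S := by
  simp only [gainWeight]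
  rw [sum_ite, sum_const, ← sum_filter_add_sum_filter_not _ (fun S => S.card = 2), filter_filter,
    filter_filter]
  have hpairs :
      ∑ S ∈ affectedSets π b with S ⊆ insert b J ∧ S.card = 2, (4 - (S.card : ℤ)) =
        #{S ∈ affectedSets π b | S ⊆ insert b J ∧ S.card = 2} • 2 := by
    rw [← sum_const]
    exact sum_congr rfl fun S hS => by rw [(mem_filter.mp hS).2.2]; norm_num
  have htriples := card_nsmul_le_sum {S ∈ affectedSets π b | S ⊆ insert b J ∧ S.card ≠ 2}
    (fun S => 4 - (S.card : ℤ)) 1 fun S hS => by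
      have := (mem_affectedSets.mp (mem_filter.mp hS).1).1
      omega
  simp only [nsmul_eq_mul, mul_one] at hpairs htriples ⊢
  linarith

theorem sum_gainWeight_pos (hbJ : b ∉ J) (hB : rankedAbove π b ⊆ J)
    (hne : (rankedAbove π b).Nonempty) (hcard : 2 * Fintype.card C ≤ 3 * #J + 4) :
    0 < ∑ S ∈ affectedSets π b, gainWeight b J S := by
  refine lt_of_lt_of_le ?_ sum_gainWeight_ge
  have hqm : #(J \ rankedAbove π b) + #(rankedAbove π b) = #J := card_sdiff_add_card_eq_card hB
  have hr : #(insert b J)ᶜ + (#J + 1) = Fintype.card C := by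
    rw [← card_insert_of_notMem hbJ]; exact card_compl_add_card _
  have hchoose : #(J.powersetCard 2 \ (J \ rankedAbove π b).powersetCard 2)
      + (#(J \ rankedAbove π b)).choose 2 = (#J).choose 2 := by
    rw [← card_powersetCard, ← card_powersetCard]
    exact card_sdiff_add_card_eq_card (powersetCard_mono sdiff_subset)
  have hpairs := card_rankedAbove_le_card_affectedSets_card_two hB
  have htriples := card_sdiff_le_card_affectedSets_card_ne_two (π := π) hbJ
  have hout := card_affectedSets_not_subset_le hB
  have hm : 1 ≤ #(rankedAbove π b) := card_pos.mpr hne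
  rw [← hqm] at hchoose
  qify at hqm hr hchoose hpairs htriples hout hm hcard ⊢
  rw [Nat.cast_choose_two, Nat.cast_choose_two] at hchoose
  push_cast at hchoose
  -- with `B = rankedAbove π b`, `m = |B|`, `q = |J \ B|` and `r = |C \ ({b} ∪ J)|`, twice the
  -- weighted count is at least `4m + m (2q + m - 1) - 2mr ≥ m (q + 1)`, as `2r ≤ q + m + 2`
  nlinarith

end Counting

section Improvement

variable {C : Type*} [Fintype C] [DecidableEq C]

theorem kDistV_sub_kDistV_moveToFront (V : Multiset (Ranking C)) (π : Ranking C) (b : C) :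
    (kDistV 3 π V : ℤ) - kDistV 3 (moveToFront π b) V =
      ∑ S ∈ affectedSets π b,
        ((topDisagreements V π S : ℤ) - topDisagreements V (moveToFront π b) S) := by
  have hA : affectedSets π b =
      {S ∈ (univ : Finset C).powerset | S.card ≤ 3}.filter
        fun S => b ∈ S ∧ ∃ c ∈ S, π c < π b := by
    ext S
    simp [mem_affectedSets]
  simp only [kDistV_eq_sum_topDisagreements, Nat.cast_sum]
  rw [← sum_sub_distrib, hA]
  refine (sum_filter_of_ne fun S _ hS => ?_).symm
  by_contra h
  refine hS ?_
  rw [topDisagreements, topDisagreements, sub_eq_zero,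
    topS_moveToFront_of_forall_le fun hb c hc => not_lt.mp fun hcb => h ⟨hb, c, hc, hcb⟩]

theorem kDistV_moveToFront_lt {V : Multiset (Ranking C)} {π : Ranking C} {b : C}
    {J : Finset C} (hV : V ≠ 0) (hbJ : b ∉ J) (hB : rankedAbove π b ⊆ J)
    (hne : (rankedAbove π b).Nonempty) (hmaj : ∀ y ∈ J, AtLeastRatio V (3 / 4) b y)
    (hcard : 2 * Fintype.card C ≤ 3 * #J + 4) :
    kDistV 3 (moveToFront π b) V < kDistV 3 π V := by
  have hgain : (Multiset.card V : ℤ) * ∑ S ∈ affectedSets π b, gainWeight b J S ≤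
      4 * ((kDistV 3 π V : ℤ) - kDistV 3 (moveToFront π b) V) := by
    rw [kDistV_sub_kDistV_moveToFront, mul_sum, mul_sum]
    exact sum_le_sum fun S hS => card_mul_gainWeight_le_topDisagreements_sub hB hmaj hS
  have hN : (0 : ℤ) < Multiset.card V := by exact_mod_cast Multiset.card_pos.mpr hV
  have := mul_pos hN (sum_gainWeight_pos hbJ hB hne hcard)
  omega

end Improvement

/-- $3/4$-Smith criterion for the 3-wise Kemeny rule: if `C = I ∪ J` is a
partition with `x ≥_{3/4} y` for all `x ∈ I`, `y ∈ J` and `0 < |I| ≤ (|J|+4)/2`, then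
the first-ranked candidate of every 3-wise median belongs to `I`. -/
theorem stmt9 {C : Type*} [Fintype C] [DecidableEq C]
    (V : Multiset (Ranking C)) (hV : V ≠ 0)
    (I J : Finset C) (hdisj : Disjoint I J) (hunion : I ∪ J = Finset.univ)
    (hmaj : ∀ x ∈ I, ∀ y ∈ J, AtLeastRatio V (3 / 4) x y)
    (hI0 : 0 < I.card) (hIJ : (I.card : ℝ) ≤ ((J.card : ℝ) + 4) / 2) :
    ∀ π : Ranking C, IsKMedian 3 V π → ∀ x : C, RankedFirst π x → x ∈ I := by
  intro π hmed x hx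
  by_contra hxI
  have hmemJ : ∀ c, c ∉ I → c ∈ J := fun c hc =>
    (mem_union.mp (hunion ▸ mem_univ c)).resolve_left hc
  obtain ⟨b, hbI, hbmin⟩ := I.exists_min_image π (card_pos.mp hI0)
  have hB : rankedAbove π b ⊆ J := fun c hc =>
    hmemJ c fun hcI => (mem_rankedAbove.mp hc).not_ge (hbmin c hcI)
  have hxb : x ∈ rankedAbove π b := mem_rankedAbove.mpr (hx b fun h => hxI (h ▸ hbI))
  have hcard : 2 * Fintype.card C ≤ 3 * #J + 4 := by
    rw [← card_univ (α := C), ← hunion, card_union_of_disjoint hdisj]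
    have : (2 : ℝ) * #I ≤ #J + 4 := by linarith
    exact_mod_cast (by linarith : (2 : ℝ) * (#I + #J) ≤ 3 * #J + 4)
  exact (hmed _).not_gt (kDistV_moveToFront_lt hV (disjoint_left.mp hdisj hbI) hB ⟨x, hxb⟩
    (hmaj b hbI) hcard)
end
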